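/- The field ℚ(√(-163)) has no generator over ℚ of Weil height strictly smaller than √41; that is, for every α with ℚ(α) = ℚ(√(-163)), one has H(α) ≥ √41. -/

import Mathlib

/-!
A generator `α` of `ℚ(√-163)` is non-real of degree 2, so every irreducible integer polynomial
vanishing at `α` is a quadratic `aX² + bX + c` with roots `α, ᾱ`. Its Mahler measure is
`|a| · max(1, |α|²) = max(|a|, |c|)`, and the height is the square root of that. Writing
`α = p + q√-163`, the discriminant is `b² - 4ac = -163 (2aq)²`; as `163` is squarefree, `e = 2aq`
is a nonzero integer. A finite search shows that `4ac = b² + 163e²` forces `max(|a|, |c|) ≥ 41`.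
-/

open Polynomial

/-- The Mahler measure of an integer polynomial. -/
noncomputable def mahlerMeasure (f : Polynomial ℤ) : ℝ :=
  |(f.leadingCoeff : ℝ)| *
    (((f.map (Int.castRingHom ℂ)).roots).map (fun z => max 1 ‖z‖)).prod

/-- The absolute multiplicative Weil height of an algebraic complex number. -/
noncomputable def height (α : ℂ) : ℝ :=
  sInf {h : ℝ | ∃ f : Polynomial ℤ, Irreducible f ∧ Polynomial.aeval α f = 0 ∧
    h = mahlerMeasure f ^ ((f.natDegree : ℝ)⁻¹)}

open ComplexConjugate IntermediateField

theorem Rat.den_eq_one_of_squarefree_mul_sq_eq_intCast {d n : ℤ} (hd : Squarefree d) {r : ℚ}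
    (h : d * r ^ 2 = n) : r.den = 1 := by
  have hint : d * r.num ^ 2 = n * (r.den : ℤ) ^ 2 := by
    have : (d : ℚ) * r.num ^ 2 = n * (r.den : ℚ) ^ 2 := by
      rw [← Rat.mul_den_eq_num, ← h]; ring
    exact_mod_cast this
  have hcop : IsCoprime ((r.den : ℤ) ^ 2) (r.num ^ 2) :=
    (Int.isCoprime_iff_gcd_eq_one.mpr (by simpa [Int.gcd] using r.reduced)).symm.pow
  have hdvd : (r.den : ℤ) * r.den ∣ d := by
    rw [← sq]
    exact hcop.dvd_of_dvd_mul_right ⟨n, by rw [hint]; ring⟩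
  simpa using Int.isUnit_iff_natAbs_eq.mp (hd _ hdvd)

set_option maxRecDepth 10000 in
theorem four_mul_ne_sq_add_163_mul_sq : ∀ m ∈ Finset.Icc 1 6, ∀ b ∈ Finset.range 80,
    ∀ a ∈ Finset.Icc 1 40,
      ¬(4 * a ∣ b ^ 2 + 163 * m ^ 2 ∧ (b ^ 2 + 163 * m ^ 2) / (4 * a) ≤ 40) := by
  decide

theorem forty_one_le_max_of_four_mul_mul_eq {a b c m : ℕ} (hm : m ≠ 0)
    (h : 4 * a * c = b ^ 2 + 163 * m ^ 2) : 41 ≤ max a c := by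
  by_contra! hlt
  have ha : a ≤ 40 := le_of_max_le_left (Nat.le_of_lt_succ hlt)
  have hc : c ≤ 40 := le_of_max_le_right (Nat.le_of_lt_succ hlt)
  have hm2 : 0 < m ^ 2 := by positivity
  have ha0 : a ≠ 0 := by rintro rfl; omega
  have hac : a * c ≤ 40 * 40 := Nat.mul_le_mul ha hc
  have hm : m ≤ 6 := by nlinarith
  have hb : b < 80 := lt_of_pow_lt_pow_left₀ 2 (Nat.zero_le _) (by nlinarith)
  refine four_mul_ne_sq_add_163_mul_sq m (by simp; omega) b (by simpa) a (by simp; omega) ⟨?_, ?_⟩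
  · exact h ▸ dvd_mul_right _ _
  · rwa [← h, Nat.mul_div_cancel_left _ (by omega)]

theorem forty_one_le_max_abs_of_discrim_eq {a b c e : ℤ} (he : e ≠ 0)
    (h : discrim a b c = -163 * e ^ 2) : 41 ≤ max |a| |c| := by
  rw [discrim] at h
  have hac : 0 < a * c := by nlinarith [sq_nonneg b, pow_pos (abs_pos.mpr he) 2, sq_abs e]
  have hnat : 4 * a.natAbs * c.natAbs = b.natAbs ^ 2 + 163 * e.natAbs ^ 2 := by
    zify
    rw [mul_assoc, ← abs_mul, abs_of_pos hac, sq_abs, sq_abs]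
    linarith
  have := forty_one_le_max_of_four_mul_mul_eq (Int.natAbs_ne_zero.mpr he) hnat
  rw [Int.abs_eq_natAbs, Int.abs_eq_natAbs]
  omega

section Adjoin

variable {K L : Type*} [Field K] [Field L] [Algebra K L]

theorem isIntegral_of_sq_eq_algebraMap {x : L} {d : K} (hx : x ^ 2 = algebraMap K L d) :
    IsIntegral K x :=
  IsIntegral.of_pow two_pos (hx ▸ isIntegral_algebraMap)

theorem natDegree_minpoly_eq_two_of_sq_eq_algebraMap {x : L} {d : K}
    (hx : x ^ 2 = algebraMap K L d) (hxK : x ∉ Set.range (algebraMap K L)) :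
    (minpoly K x).natDegree = 2 := by
  have hint := isIntegral_of_sq_eq_algebraMap hx
  refine le_antisymm ?_ ((minpoly.two_le_natDegree_iff hint).mpr hxK)
  have hdvd : minpoly K x ∣ X ^ 2 - C d := minpoly.dvd K x (by simp [hx])
  simpa using natDegree_le_of_dvd hdvd (X_pow_sub_C_ne_zero two_pos d)

theorem isIntegral_of_mem_adjoin {x z : L} (hx : IsIntegral K x) (hz : z ∈ K⟮x⟯) :
    IsIntegral K z :=
  have := adjoin.finiteDimensional hx
  IntermediateField.isIntegral_iff.mp (IsIntegral.of_finite K (⟨z, hz⟩ : K⟮x⟯))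

theorem exists_eq_add_mul_of_mem_adjoin {x z : L} (hx : IsIntegral K x)
    (hdeg : (minpoly K x).natDegree = 2) (hz : z ∈ K⟮x⟯) :
    ∃ p q : K, z = algebraMap K L p + algebraMap K L q * x := by
  obtain ⟨g, hgdeg, hg⟩ := (adjoin.powerBasis hx).exists_eq_aeval ⟨z, hz⟩
  rw [adjoin.powerBasis_dim, hdeg] at hgdeg
  refine ⟨g.coeff 0, g.coeff 1, ?_⟩
  have := congrArg Subtype.val hg
  rw [adjoin.powerBasis_gen, eq_X_add_C_of_natDegree_le_one (Nat.le_of_lt_succ hgdeg)] at this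
  simpa [add_comm] using this

theorem exists_eq_add_mul_of_adjoin_eq_adjoin {x α : L} {d : K} (hx : x ^ 2 = algebraMap K L d)
    (hxK : x ∉ Set.range (algebraMap K L)) (hαx : K⟮α⟯ = K⟮x⟯) :
    ∃ p q : K, q ≠ 0 ∧ α = algebraMap K L p + algebraMap K L q * x := by
  obtain ⟨p, q, hpq⟩ := exists_eq_add_mul_of_mem_adjoin (isIntegral_of_sq_eq_algebraMap hx)
    (natDegree_minpoly_eq_two_of_sq_eq_algebraMap hx hxK) (hαx ▸ mem_adjoin_simple_self K α)
  refine ⟨p, q, ?_, hpq⟩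
  rintro rfl
  have hα : K⟮α⟯ = ⊥ := adjoin_simple_eq_bot_iff.mpr ⟨p, by simp [hpq]⟩
  exact hxK (mem_bot.mp (hα ▸ hαx ▸ mem_adjoin_simple_self K x))

end Adjoin

section IntegerPolynomial

variable {L : Type*} [Field L] [Algebra ℚ L]

theorem natDegree_eq_natDegree_minpoly_of_irreducible {α : L} {f : ℤ[X]}
    (hf : Irreducible f) (hfα : aeval α f = 0) : f.natDegree = (minpoly ℚ α).natDegree := by
  have := Algebra.charZero_of_charZero ℚ L
  have hdeg : f.natDegree ≠ 0 := by
    intro h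
    rw [eq_C_of_natDegree_eq_zero h] at hf hfα
    have : f.coeff 0 = 0 := by simpa using hfα
    simp [this] at hf
  have hfℚ : Irreducible (f.map (Int.castRingHom ℚ)) :=
    (IsPrimitive.Int.irreducible_iff_irreducible_map_cast (hf.isPrimitive hdeg)).mp hf
  have hfℚα : aeval α (f.map (Int.castRingHom ℚ)) = 0 := by
    rwa [← algebraMap_int_eq, aeval_map_algebraMap]
  have := congrArg natDegree (minpoly.eq_of_irreducible hfℚ hfℚα)
  rwa [natDegree_mul_C (inv_ne_zero (leadingCoeff_ne_zero.mpr hfℚ.ne_zero)),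
    natDegree_map_eq_of_injective (RingHom.injective_int _)] at this

theorem exists_irreducible_int_aeval_eq_zero {α : L} (hα : IsIntegral ℚ α) :
    ∃ f : ℤ[X], Irreducible f ∧ aeval α f = 0 := by
  set g := IsLocalization.integerNormalization (nonZeroDivisors ℤ) (minpoly ℚ α)
  obtain ⟨b, hb, hgb⟩ := IsLocalization.integerNormalization_spec (nonZeroDivisors ℤ) (minpoly ℚ α)
  have hc : (g.content : ℚ) ≠ 0 := by
    exact_mod_cast content_eq_zero_iff.not.mpr
      (IsFractionRing.integerNormalization_eq_zero_iff.not.mpr (minpoly.ne_zero hα))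
  have hb0 : (b : ℚ) ≠ 0 := by exact_mod_cast nonZeroDivisors.ne_zero hb
  have hmap : g.primPart.map (algebraMap ℤ ℚ) = C ((b : ℚ) / g.content) * minpoly ℚ α := by
    have := congrArg (map (algebraMap ℤ ℚ)) g.eq_C_content_mul_primPart
    rw [hgb, Polynomial.map_mul, map_C, ← Int.cast_smul_eq_zsmul ℚ, smul_eq_C_mul,
      algebraMap_int_eq, eq_intCast] at this
    rw [algebraMap_int_eq, div_eq_inv_mul, C_mul, mul_assoc, this, ← mul_assoc, ← C_mul,
      inv_mul_cancel₀ hc, C_1, one_mul]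
  have hunit : IsUnit (C ((b : ℚ) / g.content)) :=
    isUnit_C.mpr (isUnit_iff_ne_zero.mpr (div_ne_zero hb0 hc))
  have hassoc : Associated (minpoly ℚ α) (g.primPart.map (algebraMap ℤ ℚ)) := by
    rw [hmap]
    exact (associated_unit_mul_left _ _ hunit).symm
  refine ⟨g.primPart, (isPrimitive_primPart g).irreducible_iff_irreducible_map_fraction_map.mpr
    (hassoc.irreducible (minpoly.irreducible hα)), ?_⟩
  rw [← aeval_map_algebraMap ℚ, hmap, map_mul, minpoly.aeval, mul_zero]

end IntegerPolynomial

namespace Complex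

theorem im_sq_of_sq_eq_neg {x : ℂ} {d : ℝ} (hd : 0 ≤ d) (hx : x ^ 2 = -d) : x.im ^ 2 = d := by
  have hre := congrArg re hx
  have him := congrArg im hx
  simp only [sq, mul_re, mul_im, neg_re, neg_im, ofReal_re, ofReal_im] at hre him
  rcases mul_eq_zero.mp (show x.re * x.im = 0 by linarith) with h | h <;>
    simp only [h] at hre ⊢ <;> nlinarith

theorem coeffs_eq_of_quadratic_eq_zero {a b c : ℝ} {α : ℂ} (hα : α.im ≠ 0)
    (h : a * α ^ 2 + b * α + c = 0) : b = -(2 * a * α.re) ∧ c = a * normSq α := by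
  have hre := congrArg re h
  have him := congrArg im h
  simp only [sq, add_re, add_im, mul_re, mul_im, ofReal_re, ofReal_im, zero_re, zero_im] at hre him
  have hb : b = -(2 * a * α.re) := mul_right_cancel₀ hα (by linarith)
  refine ⟨hb, ?_⟩
  rw [normSq_apply]
  subst hb
  linarith

theorem discrim_eq_neg_sq_of_quadratic_eq_zero {a b c : ℝ} {α : ℂ} (hα : α.im ≠ 0)
    (h : a * α ^ 2 + b * α + c = 0) : discrim a b c = -(2 * a * α.im) ^ 2 := by
  obtain ⟨rfl, rfl⟩ := coeffs_eq_of_quadratic_eq_zero hα h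
  rw [discrim, normSq_apply]
  ring

theorem max_one_norm_mul_self (α : ℂ) : max 1 ‖α‖ * max 1 ‖α‖ = max 1 (normSq α) := by
  rw [normSq_eq_norm_sq]
  rcases le_total 1 ‖α‖ with h | h
  · rw [max_eq_right h, max_eq_right (by nlinarith)]; ring
  · rw [max_eq_left h, max_eq_left (by nlinarith [norm_nonneg α])]; ring

end Complex

theorem mahlerMeasure_quadratic_of_im_ne_zero {a b c : ℤ} (ha : a ≠ 0) {α : ℂ} (hα : α.im ≠ 0)
    (h : (a : ℂ) * α ^ 2 + b * α + c = 0) :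
    _root_.mahlerMeasure (C a * X ^ 2 + C b * X + C c) = max |(a : ℝ)| |(c : ℝ)| := by
  obtain ⟨hb, hc⟩ := Complex.coeffs_eq_of_quadratic_eq_zero (a := a) (b := b) (c := c) hα
    (by exact_mod_cast h)
  have hroots : (C a * X ^ 2 + C b * X + C c).aroots ℂ = {α, conj α} := by
    refine (aroots_quadratic_eq_pair_iff_of_ne_zero (by simpa using ha)).mpr ⟨?_, ?_⟩
    · have := congrArg ((↑) : ℝ → ℂ) hb
      push_cast at this
      rw [Complex.add_conj, eq_intCast, eq_intCast, this]
      push_cast; ring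
    · have := congrArg ((↑) : ℝ → ℂ) hc
      push_cast at this
      rw [mul_assoc, Complex.mul_conj, eq_intCast, eq_intCast, this]
  rw [_root_.mahlerMeasure, leadingCoeff_quadratic ha, ← algebraMap_int_eq, ← aroots_def, hroots]
  simp only [Multiset.insert_eq_cons, Multiset.map_cons, Multiset.map_singleton,
    Multiset.prod_cons, Multiset.prod_singleton, Complex.norm_conj, Complex.max_one_norm_mul_self]
  rw [mul_max_of_nonneg _ _ (abs_nonneg _), mul_one, hc, abs_mul,
    abs_of_nonneg (Complex.normSq_nonneg α)]

theorem exists_discrim_eq_neg_mul_sq {d : ℤ} (hd : Squarefree d) {a b c : ℤ} (ha : a ≠ 0)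
    {α : ℂ} (hα : α.im ≠ 0) {q : ℚ} (hαim : α.im ^ 2 = d * q ^ 2)
    (h : (a : ℂ) * α ^ 2 + b * α + c = 0) : ∃ e : ℤ, e ≠ 0 ∧ discrim a b c = -d * e ^ 2 := by
  have hq : q ≠ 0 := by
    rintro rfl
    simp_all
  have hdisc : d * (2 * a * q) ^ 2 = ((-discrim a b c : ℤ) : ℚ) := by
    have := Complex.discrim_eq_neg_sq_of_quadratic_eq_zero (a := a) (b := b) (c := c) hα
      (by exact_mod_cast h)
    have hℝ : ((d * (2 * a * q) ^ 2 : ℚ) : ℝ) = ((-discrim a b c : ℤ) : ℝ) := by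
      push_cast [discrim] at this ⊢
      linear_combination this - (2 * a : ℝ) ^ 2 * hαim
    exact_mod_cast hℝ
  have hden := Rat.den_eq_one_of_squarefree_mul_sq_eq_intCast hd hdisc
  refine ⟨(2 * a * q).num, Rat.num_ne_zero.mpr (by simp [ha, hq]), ?_⟩
  rw [← Rat.coe_int_num_of_den_eq_one hden] at hdisc
  have : d * (2 * a * q).num ^ 2 = -discrim a b c := by exact_mod_cast hdisc
  linarith

theorem forty_one_le_mahlerMeasure {α : ℂ} (hα : α.im ≠ 0) {q : ℚ}
    (hαim : α.im ^ 2 = 163 * q ^ 2) {f : ℤ[X]} (hf : f.natDegree = 2) (hfα : aeval α f = 0) :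
    41 ≤ _root_.mahlerMeasure f := by
  have hfq : f = C (f.coeff 2) * X ^ 2 + C (f.coeff 1) * X + C (f.coeff 0) :=
    eq_quadratic_of_degree_le_two (degree_le_of_natDegree_le hf.le)
  set a := f.coeff 2
  set b := f.coeff 1
  set c := f.coeff 0
  have ha : a ≠ 0 := by
    have := leadingCoeff_ne_zero.mpr (ne_zero_of_natDegree_gt (hf ▸ two_pos))
    rwa [leadingCoeff, hf] at this
  have hroot : (a : ℂ) * α ^ 2 + b * α + c = 0 := by
    rw [hfq] at hfα
    simpa using hfα
  have h163 : Squarefree (163 : ℤ) :=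
    (show Prime (163 : ℤ) from Int.prime_iff_natAbs_prime.mpr (by norm_num)).squarefree
  obtain ⟨e, he, hdisc⟩ :=
    exists_discrim_eq_neg_mul_sq h163 ha hα (by exact_mod_cast hαim) hroot
  rw [hfq, mahlerMeasure_quadratic_of_im_ne_zero ha hα hroot]
  exact_mod_cast forty_one_le_max_abs_of_discrim_eq he hdisc

/-- Every generator `α` of `ℚ(√-163)` over `ℚ` satisfies `H(α) ≥ √41`. -/
theorem height_generator_ge_sqrt_41 (α : ℂ)
    (hgen : ∃ x : ℂ, x ^ 2 = (-163 : ℂ) ∧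
      IntermediateField.adjoin ℚ {α} = IntermediateField.adjoin ℚ {x}) :
    Real.sqrt 41 ≤ height α := by
  obtain ⟨x, hx, hαx⟩ := hgen
  have hx' : x ^ 2 = algebraMap ℚ ℂ (-163) := by simpa using hx
  have hxim : x.im ^ 2 = 163 := Complex.im_sq_of_sq_eq_neg (by norm_num) (by rw [hx]; norm_num)
  have hxim0 : x.im ≠ 0 := by
    rintro h
    simp [h] at hxim
  have hxℚ : x ∉ Set.range (algebraMap ℚ ℂ) := by
    rintro ⟨r, rfl⟩
    simp at hxim0
  have hxint := isIntegral_of_sq_eq_algebraMap hx'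
  have hαint := isIntegral_of_mem_adjoin hxint (hαx ▸ mem_adjoin_simple_self ℚ α)
  have hαdeg : (minpoly ℚ α).natDegree = 2 := by
    rw [← adjoin.finrank hαint, hαx, adjoin.finrank hxint,
      natDegree_minpoly_eq_two_of_sq_eq_algebraMap hx' hxℚ]
  obtain ⟨p, q, hq, hpq⟩ := exists_eq_add_mul_of_adjoin_eq_adjoin hx' hxℚ hαx
  have hα : α.im ≠ 0 := by simp [hpq, hq, hxim0]
  have hαim : α.im ^ 2 = 163 * q ^ 2 := by simp [hpq, mul_pow, hxim, mul_comm]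
  refine le_csInf ?_ ?_
  · obtain ⟨f, hf, hfα⟩ := exists_irreducible_int_aeval_eq_zero hαint
    exact ⟨_, f, hf, hfα, rfl⟩
  · rintro _ ⟨f, hf, hfα, rfl⟩
    have hfdeg := (natDegree_eq_natDegree_minpoly_of_irreducible hf hfα).trans hαdeg
    rw [hfdeg, Nat.cast_two, inv_eq_one_div, ← Real.sqrt_eq_rpow]
    exact Real.sqrt_le_sqrt (forty_one_le_mahlerMeasure hα hαim hfdeg hfα)
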